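/- Let X be a finite poset and f : K(X) → X the projection from the order complex. Then the unit η : id → f_* f* of the adjunction f* ⊣ f_* (inverse image left adjoint to direct image of sheaves on posets) is a natural isomorphism. -/

import Mathlib

open CategoryTheory

/-- The order complex of a poset `X`: nonempty finite totally ordered subsets
(chains) of `X`, viewed as a poset under the face (inclusion) relation. -/
def OrderCx (X : Type) [PartialOrder X] : Type :=
  {s : Finset X // s.Nonempty ∧ IsChain (· ≤ ·) (s : Set X)}

instance (X : Type) [PartialOrder X] : PartialOrder (OrderCx X) :=
  inferInstanceAs (PartialOrder {s : Finset X // s.Nonempty ∧ IsChain (· ≤ ·) (s : Set X)})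

/-- A nonempty finite chain has a maximum. -/
lemma OrderCx.exists_max (X : Type) [PartialOrder X] (s : OrderCx X) :
    ∃ m ∈ s.1, ∀ x ∈ s.1, x ≤ m := by
  obtain ⟨m, hm, hmax⟩ := s.1.exists_maximal s.2.1
  refine ⟨m, hm, fun x hx => ?_⟩
  rcases eq_or_ne x m with rfl | hne
  · exact le_rfl
  · rcases s.2.2 hx hm hne with h | h
    · exact h
    · exact hmax hx h

/-- The projection `f : K(X) → X` sending a chain `x_0 < ... < x_k` to its maximum. -/
noncomputable def chainMax (X : Type) [PartialOrder X] (s : OrderCx X) : X :=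
  (OrderCx.exists_max X s).choose

lemma chainMax_mem (X : Type) [PartialOrder X] (s : OrderCx X) : chainMax X s ∈ s.1 :=
  (OrderCx.exists_max X s).choose_spec.1

lemma le_chainMax (X : Type) [PartialOrder X] (s : OrderCx X) :
    ∀ x ∈ s.1, x ≤ chainMax X s :=
  (OrderCx.exists_max X s).choose_spec.2

/-- The projection is order preserving (faces map to smaller-or-equal elements). -/
lemma chainMax_monotone (X : Type) [PartialOrder X] : Monotone (chainMax X) := by
  intro s t h
  exact le_chainMax X t _ (Finset.le_iff_subset.mp h (chainMax_mem X s))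

/-- The pullback functor `f* : Shv(X, C) → Shv(K(X), C)` along the projection
`f : K(X) → X`, given by `(f*F)(x_•) = F(max x_•)` (precomposition with `f`). -/
noncomputable def pullbackOrderCx (X : Type) [PartialOrder X]
    (C : Type*) [Category C] : (X ⥤ C) ⥤ (OrderCx X ⥤ C) :=
  (Functor.whiskeringLeft (OrderCx X) X C).obj (chainMax_monotone X).functor

/-!
Restricting `α : f*F ⟶ f*G` to singleton chains `{x}` gives a candidate `F ⟶ G`. It is natural
because every `x ≤ y` is the image of the face `{x} ≤ {x, y}`, and it recovers `α` because every
chain `s` contains the singleton `{max s}` in the same fibre of `f`. Hence `f*` is fully faithful,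
and the unit of `f* ⊣ f_*` is an isomorphism.
-/

namespace CategoryTheory.Functor

variable {P Q : Type*} [Preorder P] [Preorder Q] (L : P ⥤ Q) {C : Type*} [Category C]
  {σ : Q → P} (hLσ : ∀ q, L.obj (σ q) = q)

def descApp {F G : Q ⥤ C} (α : L ⋙ F ⟶ L ⋙ G) (q : Q) : F.obj q ⟶ G.obj q :=
  F.map (homOfLE (hLσ q).ge) ≫ α.app (σ q) ≫ G.map (homOfLE (hLσ q).le)

lemma descApp_comp_map {F G : Q ⥤ C} (α : L ⋙ F ⟶ L ⋙ G) {q : Q} {p : P}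
    (hp : σ q ≤ p) (hq : q ≤ L.obj p) :
    descApp L hLσ α q ≫ G.map (homOfLE hq) = F.map (homOfLE hq) ≫ α.app p := by
  have hα : F.map (L.map (homOfLE hp)) ≫ α.app p = α.app (σ q) ≫ G.map (L.map (homOfLE hp)) :=
    α.naturality (homOfLE hp)
  rw [descApp, Category.assoc, Category.assoc, ← G.map_comp,
    Subsingleton.elim (_ ≫ homOfLE hq) (L.map (homOfLE hp)), ← hα, ← F.map_comp_assoc]
  rfl

lemma descApp_obj (hσL : ∀ p, σ (L.obj p) ≤ p) {F G : Q ⥤ C} (α : L ⋙ F ⟶ L ⋙ G) (p : P) :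
    descApp L hLσ α (L.obj p) = α.app p := by
  simpa only [homOfLE_refl, F.map_id, G.map_id, Category.comp_id, Category.id_comp] using
    descApp_comp_map L hLσ α (hσL p) le_rfl

variable (hσL : ∀ p, σ (L.obj p) ≤ p) (hlift : ∀ ⦃q q'⦄, q ≤ q' → ∃ p, σ q ≤ p ∧ L.obj p = q')

def descNatTrans {F G : Q ⥤ C} (α : L ⋙ F ⟶ L ⋙ G) : F ⟶ G where
  app := descApp L hLσ α
  naturality q q' h := by
    obtain ⟨p, hp, rfl⟩ := hlift (leOfHom h)
    rw [descApp_obj L hLσ hσL]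
    exact (descApp_comp_map L hLσ α hp (leOfHom h)).symm

def fullyFaithfulWhiskeringLeftObjOfSection :
    ((whiskeringLeft P Q C).obj L).FullyFaithful where
  preimage := descNatTrans L hLσ hσL hlift
  map_preimage α := by
    ext p
    exact descApp_obj L hLσ hσL α p
  preimage_map {F G} β := by
    ext q
    change F.map _ ≫ β.app _ ≫ G.map _ = _
    rw [← β.naturality, ← F.map_comp_assoc, Subsingleton.elim (_ ≫ _) (𝟙 q), F.map_id,
      Category.id_comp]

end CategoryTheory.Functor

namespace OrderCx

variable {X : Type} [PartialOrder X]

def singleton (x : X) : OrderCx X :=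
  ⟨{x}, Finset.singleton_nonempty x, by simp⟩

lemma chainMax_eq_of_mem {s : OrderCx X} {y : X} (hy : y ∈ s.1) (hmax : ∀ z ∈ s.1, z ≤ y) :
    chainMax X s = y :=
  le_antisymm (hmax _ (chainMax_mem X s)) (le_chainMax X s y hy)

lemma chainMax_singleton (x : X) : chainMax X (singleton x) = x :=
  chainMax_eq_of_mem (Finset.mem_singleton_self x) (fun _ hz => (Finset.mem_singleton.mp hz).le)

lemma singleton_chainMax_le (s : OrderCx X) : singleton (chainMax X s) ≤ s :=
  Finset.singleton_subset_iff.mpr (chainMax_mem X s)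

lemma exists_singleton_le_chainMax_eq {x y : X} (hxy : x ≤ y) :
    ∃ s : OrderCx X, singleton x ≤ s ∧ chainMax X s = y := by
  classical
  let s : OrderCx X := ⟨{x, y}, Finset.insert_nonempty x {y}, by simpa using IsChain.pair hxy⟩
  refine ⟨s, Finset.singleton_subset_iff.mpr (Finset.mem_insert_self x {y}),
    chainMax_eq_of_mem (by simp [s]) ?_⟩
  simp [s, hxy]

end OrderCx

noncomputable def fullyFaithfulPullbackOrderCx (X : Type) [PartialOrder X] (C : Type*)
    [Category C] :
    (pullbackOrderCx X C).FullyFaithful :=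
  Functor.fullyFaithfulWhiskeringLeftObjOfSection _ OrderCx.chainMax_singleton
    OrderCx.singleton_chainMax_le fun _ _ => OrderCx.exists_singleton_le_chainMax_eq

theorem unit_pullback_orderCx_isIso_general (k : Type) [Field k]
    (X : Type) [PartialOrder X]
    (fStar : (OrderCx X ⥤ FGModuleCat k) ⥤ (X ⥤ FGModuleCat k))
    (adj : pullbackOrderCx X (FGModuleCat k) ⊣ fStar) :
    IsIso adj.unit :=
  have := (fullyFaithfulPullbackOrderCx X (FGModuleCat k)).full
  have := (fullyFaithfulPullbackOrderCx X (FGModuleCat k)).faithful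
  adj.unit_isIso_of_L_fully_faithful

/-- For a finite poset `X` with order complex projection
`f : K(X) → X`, the unit `η : id → f_* f*` of the adjunction `f* ⊣ f_*`
(inverse image left adjoint to direct image of sheaves valued in `vec`) is a
natural isomorphism.  (The direct image `f_*` is any right adjoint of `f*`.) -/
theorem unit_pullback_orderCx_isIso (k : Type) [Field k]
    (X : Type) [PartialOrder X] [Fintype X]
    (fStar : (OrderCx X ⥤ FGModuleCat k) ⥤ (X ⥤ FGModuleCat k))
    (adj : pullbackOrderCx X (FGModuleCat k) ⊣ fStar) :
    IsIso adj.unit :=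
  unit_pullback_orderCx_isIso_general k X fStar adj
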